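/- Consider a mixed maintenance instance on a path whose job set is partitioned into non-preemptive jobs E_np and preemptive jobs E_p. Let S* be any feasible mixed schedule of the whole instance, let σ be a feasible non-preemptive schedule of the jobs E_np alone whose busy time is minimal among all feasible non-preemptive schedules of E_np, and let ρ be a feasible preemptive schedule of the jobs E_p alone whose busy time is minimal among all feasible preemptive schedules of E_p. Then the mixed schedule obtained by combining σ and ρ is feasible for the whole instance and its busy time is at most 2 times the busy time of S*. (This yields a 2-approximation for mixed MINCONNECTIVITY on a path.) -/
import Mathlib


open MeasureTheory Set
open scoped ENNReal

/-- Feasibility of a non-preemptive schedule of jobs on a path: job `i` starts at `s i`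
within its window and is processed during `[s i, s i + p i]`. -/
def PathNPFeasible {ι : Type*} (r d p : ι → ℝ) (s : ι → ℝ) : Prop :=
  ∀ i, r i ≤ s i ∧ s i + p i ≤ d i

/-- Feasibility of a preemptive schedule of jobs on a path: job `i` is processed during the
measurable set `S i ⊆ [r i, d i]` of measure `p i`. -/
def PathPFeasible {ι : Type*} (r d p : ι → ℝ) (S : ι → Set ℝ) : Prop :=
  ∀ i, MeasurableSet (S i) ∧ S i ⊆ Set.Icc (r i) (d i) ∧
    volume (S i) = ENNReal.ofReal (p i)

/-- The busy time of a non-preemptive schedule: the measure of the union of the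
processing intervals (= the total disconnected time on a path). -/
noncomputable def npBusy {ι : Type*} (p : ι → ℝ) (s : ι → ℝ) : ℝ≥0∞ :=
  volume (⋃ i, Set.Icc (s i) (s i + p i))

/-- The busy time of a preemptive schedule: the measure of the union of the
processing sets (= the total disconnected time on a path). -/
noncomputable def pBusy {ι : Type*} (S : ι → Set ℝ) : ℝ≥0∞ :=
  volume (⋃ i, S i)

/-- **Theorem 9 (2-approximation for mixed MINCONNECTIVITY on a path).**
Given a mixed instance with non-preemptive jobs `ιn` and preemptive jobs `ιp`, any feasible
mixed schedule `(σs, ρs)`, an optimal feasible non-preemptive schedule `σ` of the jobs `ιn`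
alone and an optimal feasible preemptive schedule `ρ` of the jobs `ιp` alone, the combination
of `σ` and `ρ` is a feasible mixed schedule and its busy time is at most twice the busy time
of `(σs, ρs)`. -/
theorem mixed_two_approximation {ιn ιp : Type*}
    (rn dn pn : ιn → ℝ) (rp dp pp : ιp → ℝ)
    (hpn : ∀ i, 0 ≤ pn i) (hwn : ∀ i, rn i + pn i ≤ dn i)
    (hpp : ∀ i, 0 ≤ pp i) (hwp : ∀ i, rp i + pp i ≤ dp i)
    -- an arbitrary feasible mixed schedule `S* = (σs, ρs)`
    (σs : ιn → ℝ) (hσs : PathNPFeasible rn dn pn σs)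
    (ρs : ιp → Set ℝ) (hρs : PathPFeasible rp dp pp ρs)
    -- an optimal non-preemptive schedule of the non-preemptive jobs alone
    (σ : ιn → ℝ) (hσ : PathNPFeasible rn dn pn σ)
    (hσopt : ∀ σ' : ιn → ℝ, PathNPFeasible rn dn pn σ' → npBusy pn σ ≤ npBusy pn σ')
    -- an optimal preemptive schedule of the preemptive jobs alone
    (ρ : ιp → Set ℝ) (hρ : PathPFeasible rp dp pp ρ)
    (hρopt : ∀ ρ' : ιp → Set ℝ, PathPFeasible rp dp pp ρ' → pBusy ρ ≤ pBusy ρ') :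
    (PathNPFeasible rn dn pn σ ∧ PathPFeasible rp dp pp ρ) ∧
    volume ((⋃ i, Set.Icc (σ i) (σ i + pn i)) ∪ ⋃ i, ρ i) ≤
      2 * volume ((⋃ i, Set.Icc (σs i) (σs i + pn i)) ∪ ⋃ i, ρs i) := by
  refine ⟨⟨hσ, hρ⟩, ?_⟩
  calc volume ((⋃ i, Set.Icc (σ i) (σ i + pn i)) ∪ ⋃ i, ρ i)
      ≤ npBusy pn σ + pBusy ρ := measure_union_le _ _
    _ ≤ npBusy pn σs + pBusy ρs := add_le_add (hσopt σs hσs) (hρopt ρs hρs)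
    _ ≤ volume ((⋃ i, Set.Icc (σs i) (σs i + pn i)) ∪ ⋃ i, ρs i) +
        volume ((⋃ i, Set.Icc (σs i) (σs i + pn i)) ∪ ⋃ i, ρs i) :=
      add_le_add (measure_mono subset_union_left) (measure_mono subset_union_right)
    _ = 2 * volume ((⋃ i, Set.Icc (σs i) (σs i + pn i)) ∪ ⋃ i, ρs i) := (two_mul _).symm
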